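/- arXiv:2112.03120 — 6 statements merged into one kernel-verified Lean document; each statement's English description precedes it below -/
import Mathlib

section
/- Let G = (V, E, w) be a finite weighted graph, let F_1, …, F_M be an M-partial maximum spanning forest packing of G, and let e = (u, v) ∈ E be an edge of G that is not contained in F_1 ∪ … ∪ F_M. Then for every i ∈ {1, …, M}, the forest F_i contains a path from u to v each of whose edges has weight at least w(e). -/
open scoped Classical

/-- The total edge weight of a graph `F` with edge weights `w`. -/
noncomputable def totalWeight {V : Type} [Fintype V] [DecidableEq V]
    (F : SimpleGraph V) (w : Sym2 V → ℝ) : ℝ :=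
  ∑ e ∈ Finset.univ.filter (fun e : Sym2 V => e ∈ F.edgeSet), w e

/-- `F` is a spanning forest of `G`: an acyclic subgraph of `G` preserving reachability. -/
def IsSpanningForest {V : Type} (G F : SimpleGraph V) : Prop :=
  F ≤ G ∧ F.IsAcyclic ∧ ∀ u v : V, G.Reachable u v → F.Reachable u v

/-- `F` is a maximum spanning forest of `G` w.r.t. the weights `w`. -/
def IsMaxSpanningForest {V : Type} [Fintype V] [DecidableEq V]
    (G F : SimpleGraph V) (w : Sym2 V → ℝ) : Prop :=
  IsSpanningForest G F ∧
    ∀ F' : SimpleGraph V, IsSpanningForest G F' → totalWeight F' w ≤ totalWeight F w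

/-- `F 0, …, F (M-1)` is an `M`-partial maximum spanning forest packing of `G`:
each `F i` is a maximum spanning forest of `G` with the edges of the previous
forests deleted. -/
def IsMSFPacking {V : Type} [Fintype V] [DecidableEq V]
    (G : SimpleGraph V) (w : Sym2 V → ℝ) (M : ℕ) (F : ℕ → SimpleGraph V) : Prop :=
  ∀ i < M,
    IsMaxSpanningForest (G.deleteEdges (⋃ j ∈ Finset.range i, (F j).edgeSet)) (F i) w

open SimpleGraph

/-- If every edge of `H1` joins vertices reachable in `H2`, then `H1`-reachability
implies `H2`-reachability. -/
private lemma reach_of_adj_reach {V : Type} {H1 H2 : SimpleGraph V}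
    (h : ∀ a b : V, H1.Adj a b → H2.Reachable a b) {a b : V}
    (hr : H1.Reachable a b) : H2.Reachable a b := by
  obtain ⟨p⟩ := hr
  induction p with
  | nil => exact Reachable.refl _
  | cons hadj q ih => exact (h _ _ hadj).trans ih

/-- If a path starting at `x` uses the edge `s(x,y)`, then the rest of the path
gives a walk from `y` avoiding that edge. -/
private lemma first_edge_reach {V : Type} {H : SimpleGraph V} {x y z : V}
    (r : H.Walk x z) (hr : r.IsPath) (hxy : s(x, y) ∈ r.edges) :
    (H.deleteEdges {s(x, y)}).Reachable y z := by
  cases r with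
  | nil => simp at hxy
  | cons hadj q =>
    rw [Walk.cons_isPath_iff] at hr
    rw [Walk.edges_cons] at hxy
    rcases List.mem_cons.mp hxy with heq | hmem
    · have hb := Sym2.congr_right.mp heq
      subst hb
      have hq : s(x, y) ∉ q.edges := fun h => hr.2 (q.fst_mem_support_of_mem_edges h)
      exact ⟨q.toDeleteEdges {s(x, y)} (by
        intro e he
        simp only [Set.mem_singleton_iff]
        rintro rfl
        exact hq he)⟩
    · exact absurd (q.fst_mem_support_of_mem_edges hmem) hr.2

/-- Splitting a path at an edge it contains: deleting the edge, the endpoints of the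
path remain connected to the two endpoints of the edge. -/
private lemma middle_edge_split {V : Type} {H : SimpleGraph V} {u v x y : V}
    (p : H.Walk u v) (hp : p.IsPath) (hxy : s(x, y) ∈ p.edges) :
    ((H.deleteEdges {s(x, y)}).Reachable u x ∧ (H.deleteEdges {s(x, y)}).Reachable y v) ∨
    ((H.deleteEdges {s(x, y)}).Reachable u y ∧ (H.deleteEdges {s(x, y)}).Reachable x v) := by
  have hx : x ∈ p.support := p.fst_mem_support_of_mem_edges hxy
  have hspec := p.take_spec hx
  have hedges : p.edges = (p.takeUntil x hx).edges ++ (p.dropUntil x hx).edges := by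
    conv_lhs => rw [← hspec]
    exact Walk.edges_append _ _
  have hnd : ((p.takeUntil x hx).edges ++ (p.dropUntil x hx).edges).Nodup := by
    rw [← hedges]; exact hp.isTrail.edges_nodup
  have hdisj := (List.nodup_append.mp hnd).2.2
  rw [hedges] at hxy
  rcases List.mem_append.mp hxy with h1 | h2
  · have hp1 : (p.takeUntil x hx).IsPath := hp.takeUntil hx
    have h1' : s(x, y) ∈ (p.takeUntil x hx).reverse.edges := by
      rw [Walk.edges_reverse]; simpa using h1
    have hy := first_edge_reach _ hp1.reverse h1'
    have h2' : ∀ e ∈ (p.dropUntil x hx).edges, e ∉ ({s(x, y)} : Set (Sym2 V)) := by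
      intro e he
      simp only [Set.mem_singleton_iff]
      rintro rfl
      exact hdisj _ h1 _ he rfl
    exact Or.inr ⟨hy.symm, ⟨(p.dropUntil x hx).toDeleteEdges {s(x, y)} h2'⟩⟩
  · have hp2 : (p.dropUntil x hx).IsPath := hp.dropUntil hx
    have hy := first_edge_reach _ hp2 h2
    have h1' : ∀ e ∈ (p.takeUntil x hx).edges, e ∉ ({s(x, y)} : Set (Sym2 V)) := by
      intro e he
      simp only [Set.mem_singleton_iff]
      rintro rfl
      exact hdisj _ he _ h2 rfl
    exact Or.inl ⟨⟨(p.takeUntil x hx).toDeleteEdges {s(x, y)} h1'⟩, hy⟩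

/-- Adding an edge between two vertices of an acyclic graph that are not reachable
from one another keeps the graph acyclic. -/
private lemma acyclic_sup_edge {V : Type} {H : SimpleGraph V} {u v : V}
    (hH : H.IsAcyclic) (hne : u ≠ v) (hr : ¬H.Reachable u v) :
    (H ⊔ SimpleGraph.edge u v).IsAcyclic := by
  intro a c hc
  have hEdge : ∀ e ∈ (H ⊔ SimpleGraph.edge u v).edgeSet, e ≠ s(u, v) → e ∈ H.edgeSet := by
    intro e he hne'
    rw [edgeSet_sup, Set.mem_union, edge_edgeSet_of_ne hne, Set.mem_singleton_iff] at he
    tauto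
  by_cases huv : s(u, v) ∈ c.edges
  · have hu : u ∈ c.support := c.fst_mem_support_of_mem_edges huv
    have hc' : (c.rotate u hu).IsCycle := hc.rotate hu
    have hedges : s(u, v) ∈ (c.rotate u hu).edges := (c.rotate_edges u hu).mem_iff.mpr huv
    generalize c.rotate u hu = c' at hc' hedges
    cases c' with
    | nil => simp at hedges
    | @cons _ b _ hadj q =>
      rw [Walk.cons_isCycle_iff] at hc'
      obtain ⟨hq, hnsb⟩ := hc'
      rw [Walk.edges_cons] at hedges
      rcases List.mem_cons.mp hedges with heq | hmem
      · have hb := Sym2.congr_right.mp heq.symm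
        subst hb
        have hsub : ∀ e ∈ q.edges, e ∈ H.edgeSet := by
          intro e he
          refine hEdge e (q.edges_subset_edgeSet he) ?_
          rintro rfl
          exact hnsb he
        exact hr ⟨(q.transfer H hsub).reverse⟩
      · -- s(u,v) appears strictly inside q : Walk b u
        have hbv : s(u, b) ≠ s(u, v) := by
          intro h
          have := Sym2.congr_right.mp h
          subst this
          exact hnsb hmem
        have hadjH : H.Adj u b := by
          rcases hadj with h' | h'
          · exact h'
          · rw [edge_adj] at h'
            rcases h'.1 with ⟨-, rfl⟩ | ⟨rfl, rfl⟩
            · exact absurd rfl hbv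
            · exact absurd rfl hne
        have hmem' : s(u, v) ∈ q.reverse.edges := by
          rw [Walk.edges_reverse]; simpa using hmem
        have hreach := first_edge_reach q.reverse hq.reverse hmem'
        have hle : (H ⊔ SimpleGraph.edge u v).deleteEdges {s(u, v)} ≤ H := by
          intro a' b' hab
          rw [deleteEdges_adj] at hab
          rcases hab.1 with h' | h'
          · exact h'
          · rw [edge_adj] at h'
            exfalso
            apply hab.2
            rcases h'.1 with ⟨rfl, rfl⟩ | ⟨rfl, rfl⟩
            · rfl
            · exact Sym2.eq_swap
        exact hr (((hreach.mono hle).trans hadjH.symm.reachable).symm)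
  · have hsub : ∀ e ∈ c.edges, e ∈ H.edgeSet := by
      intro e he
      refine hEdge e (c.edges_subset_edgeSet he) ?_
      rintro rfl
      exact huv he
    exact hH (c.transfer H hsub) (hc.transfer hsub)

/-- `totalWeight` as a sum over any finset with the right membership. -/
private lemma totalWeight_eq {V : Type} [Fintype V] [DecidableEq V]
    (H : SimpleGraph V) (w : Sym2 V → ℝ) (s : Finset (Sym2 V))
    (h : ∀ e : Sym2 V, e ∈ s ↔ e ∈ H.edgeSet) :
    totalWeight H w = ∑ e ∈ s, w e := by
  rw [totalWeight]
  refine Finset.sum_congr ?_ (fun _ _ => rfl)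
  ext e
  simp [h e]

/-- The exchange argument: swapping a too-light edge of a maximum spanning forest
for the edge `s(u,v)` would increase the weight. -/
private lemma exchange_contra {V : Type} [Fintype V] [DecidableEq V]
    {Gi Fi : SimpleGraph V} {w : Sym2 V → ℝ} (hmax : IsMaxSpanningForest Gi Fi w)
    {u v x y : V} (huvGi : Gi.Adj u v) (hsuv_not : s(u, v) ∉ Fi.edgeSet)
    (hxyFi : Fi.Adj x y)
    (hux : (Fi.deleteEdges {s(x, y)}).Reachable u x)
    (hyv : (Fi.deleteEdges {s(x, y)}).Reachable y v)
    (hwlt : w s(x, y) < w s(u, v)) : False := by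
  set D := Fi.deleteEdges {s(x, y)} with hD
  have hne_uv : u ≠ v := huvGi.ne
  have hacyclic : Fi.IsAcyclic := hmax.1.2.1
  have hDle : D ≤ Fi := Fi.deleteEdges_le _
  have hD_acyclic : D.IsAcyclic := fun _ c hc => hacyclic (c.mapLe hDle) (hc.mapLe _)
  -- x and y are not reachable in D (the deleted edge is a bridge of the acyclic Fi)
  have hnDxy : ¬D.Reachable x y := by
    have := isAcyclic_iff_forall_adj_isBridge.mp hacyclic hxyFi
    exact isBridge_iff.mp this
  have hnDuv : ¬D.Reachable u v := fun h => hnDxy (hux.symm.trans (h.trans hyv.symm))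
  set F' := D ⊔ SimpleGraph.edge u v with hF'
  have hF'acyclic : F'.IsAcyclic := acyclic_sup_edge hD_acyclic hne_uv hnDuv
  have hedgeF' : SimpleGraph.edge u v ≤ Gi := by
    intro a b hab
    rw [edge_adj] at hab
    rcases hab.1 with ⟨rfl, rfl⟩ | ⟨rfl, rfl⟩
    · exact huvGi
    · exact huvGi.symm
  have hF'le : F' ≤ Gi := sup_le (hDle.trans hmax.1.1) hedgeF'
  have hF'adjuv : F'.Adj u v := by
    rw [hF', sup_adj, edge_adj]
    exact Or.inr ⟨Or.inl ⟨rfl, rfl⟩, hne_uv⟩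
  have hF'xy : F'.Reachable x y :=
    ((hux.symm.mono le_sup_left).trans hF'adjuv.reachable).trans (hyv.mono le_sup_left).symm
  have hF'reach : ∀ a b : V, Gi.Reachable a b → F'.Reachable a b := by
    intro a b hab
    refine reach_of_adj_reach ?_ (hmax.1.2.2 a b hab)
    intro a' b' hab'
    by_cases heq : s(a', b') = s(x, y)
    · rcases Sym2.eq_iff.mp heq with ⟨rfl, rfl⟩ | ⟨rfl, rfl⟩
      · exact hF'xy
      · exact hF'xy.symm
    · exact (SimpleGraph.Adj.reachable (by
        rw [hF', sup_adj, deleteEdges_adj]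
        exact Or.inl ⟨hab', by simpa using heq⟩))
  have hSF : IsSpanningForest Gi F' := ⟨hF'le, hF'acyclic, hF'reach⟩
  have hle := hmax.2 F' hSF
  -- now compute the weights
  have hxy_ne_uv : s(x, y) ≠ s(u, v) := by
    rintro h
    exact hsuv_not (h ▸ (SimpleGraph.mem_edgeSet _).mpr hxyFi)
  have hE : F'.edgeSet = (Fi.edgeSet \ {s(x, y)}) ∪ {s(u, v)} := by
    rw [hF', edgeSet_sup, hD, edgeSet_deleteEdges, edge_edgeSet_of_ne hne_uv]
  set E := Finset.univ.filter (fun e : Sym2 V => e ∈ Fi.edgeSet) with hEdef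
  have hFiE : totalWeight Fi w = ∑ e ∈ E, w e :=
    totalWeight_eq Fi w E (by intro e; simp [hEdef])
  have hsuv_notin : s(u, v) ∉ E.erase s(x, y) := by
    simp [hEdef, hsuv_not]
  have hxy_in : s(x, y) ∈ E := by
    simp [hEdef, (SimpleGraph.mem_edgeSet _).mpr hxyFi]
  have hF'E : totalWeight F' w = ∑ e ∈ insert s(u, v) (E.erase s(x, y)), w e := by
    refine totalWeight_eq F' w _ ?_
    intro e
    simp only [Finset.mem_insert, Finset.mem_erase, hEdef, Finset.mem_filter, Finset.mem_univ,
      true_and, hE, Set.mem_union, Set.mem_diff, Set.mem_singleton_iff]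
    tauto
  have hsum : totalWeight F' w = w s(u, v) + (totalWeight Fi w - w s(x, y)) := by
    rw [hF'E, Finset.sum_insert hsuv_notin, hFiE]
    have := Finset.sum_erase_add E w hxy_in
    linarith
  rw [hsum] at hle
  linarith

/-- **Path property of MSF packings.**
If `F 0, …, F (M-1)` is an `M`-partial MSF packing of `G` and `(u,v)` is an edge of `G`
contained in none of the forests, then every forest of the packing contains a path from
`u` to `v` each of whose edges has weight at least `w(u,v)`. -/
theorem stmt_2 {V : Type} [Fintype V] [DecidableEq V]
    (G : SimpleGraph V) (w : Sym2 V → ℝ)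
    (hw : ∀ e ∈ G.edgeSet, 0 < w e)
    (M : ℕ) (F : ℕ → SimpleGraph V) (hpack : IsMSFPacking G w M F)
    (u v : V) (huv : G.Adj u v)
    (hnot : ∀ i < M, s(u, v) ∉ (F i).edgeSet) :
    ∀ i < M, ∃ p : (F i).Walk u v, p.IsPath ∧ ∀ e ∈ p.edges, w s(u, v) ≤ w e := by
  intro i hi
  have hmax := hpack i hi
  have huvGi : (G.deleteEdges (⋃ j ∈ Finset.range i, (F j).edgeSet)).Adj u v := by
    rw [deleteEdges_adj]
    refine ⟨huv, ?_⟩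
    simp only [Set.mem_iUnion, Finset.mem_range]
    rintro ⟨j, hj, hmem⟩
    exact hnot j (lt_trans hj hi) hmem
  have hreach : (F i).Reachable u v := hmax.1.2.2 u v huvGi.reachable
  obtain ⟨p0⟩ := hreach
  refine ⟨p0.bypass, p0.bypass_isPath, ?_⟩
  intro e he
  by_contra hlt
  push_neg at hlt
  induction e using Sym2.ind with
  | _ x y =>
    have hxyFi : (F i).Adj x y := (SimpleGraph.mem_edgeSet _).mp (p0.bypass.edges_subset_edgeSet he)
    rcases middle_edge_split p0.bypass p0.bypass_isPath he with ⟨hux, hyv⟩ | ⟨huy, hxv⟩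
    · exact exchange_contra hmax huvGi (hnot i hi) hxyFi hux hyv hlt
    · have hswap : s(y, x) = s(x, y) := Sym2.eq_swap
      refine exchange_contra hmax huvGi (hnot i hi) hxyFi.symm
        (x := y) (y := x) ?_ ?_ ?_
      · rwa [hswap]
      · rwa [hswap]
      · rwa [hswap]
end

section
/- Let G = (V, E, w) be a finite weighted graph, let F_1, …, F_M be an M-partial maximum spanning forest packing of G, and let e = (u, v) ∈ E be an edge of G not contained in F_1 ∪ … ∪ F_M. Then e is M·w(e)-heavy in the subgraph G' = (V, E') where E' = {e' ∈ E : w(e') ≥ w(e)}; consequently, e is also M·w(e)-heavy in G. -/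
open scoped Classical

/-- The edge `e` crosses the vertex set `A`. -/
def Crosses {V : Type} (A : Set V) (e : Sym2 V) : Prop :=
  ∃ u v, e = s(u, v) ∧ u ∈ A ∧ v ∉ A

/-- The weight of the cut induced by the partition `{A, Aᶜ}` in the graph `H`. -/
noncomputable def graphCutWeight {V : Type} [Fintype V] [DecidableEq V]
    (H : SimpleGraph V) (w : Sym2 V → ℝ) (A : Set V) : ℝ :=
  ∑ e ∈ Finset.univ.filter (fun e : Sym2 V => e ∈ H.edgeSet ∧ Crosses A e), w e

/-- The edge `(u,v)` is `k`-heavy in `H`: every cut separating `u` and `v`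
has weight at least `k`. -/
def IsHeavy {V : Type} [Fintype V] [DecidableEq V]
    (H : SimpleGraph V) (w : Sym2 V → ℝ) (u v : V) (k : ℝ) : Prop :=
  ∀ A : Set V, u ∈ A → v ∉ A → k ≤ graphCutWeight H w A

open SimpleGraph



/-- Reachability in a graph that is `K` plus one extra edge `s(a,b)` decomposes. -/
lemma reachable_sup_edge {V : Type} (K : SimpleGraph V) (a b : V) {x y : V}
    (h : (K ⊔ SimpleGraph.fromEdgeSet {s(a,b)}).Reachable x y) :
    K.Reachable x y ∨ (K.Reachable x a ∧ K.Reachable b y) ∨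
      (K.Reachable x b ∧ K.Reachable a y) := by
  obtain ⟨p⟩ := h
  induction p with
  | nil => exact Or.inl (Reachable.refl _)
  | @cons x z y h p ih =>
    rcases h with hK | hE
    · rcases ih with h1 | ⟨h1, h2⟩ | ⟨h1, h2⟩
      · exact Or.inl (hK.reachable.trans h1)
      · exact Or.inr (Or.inl ⟨hK.reachable.trans h1, h2⟩)
      · exact Or.inr (Or.inr ⟨hK.reachable.trans h1, h2⟩)
    · rw [SimpleGraph.fromEdgeSet_adj, Set.mem_singleton_iff, Sym2.eq_iff] at hE
      rcases hE.1 with ⟨hxa, hzb⟩ | ⟨hxb, hza⟩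
      · subst hxa; subst hzb
        rcases ih with h1 | ⟨h1, h2⟩ | ⟨h1, h2⟩
        · exact Or.inr (Or.inl ⟨Reachable.refl _, h1⟩)
        · exact Or.inr (Or.inl ⟨Reachable.refl _, h2⟩)
        · exact Or.inl h2
      · subst hxb; subst hza
        rcases ih with h1 | ⟨h1, h2⟩ | ⟨h1, h2⟩
        · exact Or.inr (Or.inr ⟨Reachable.refl _, h1⟩)
        · exact Or.inl h2
        · exact Or.inr (Or.inr ⟨Reachable.refl _, h2⟩)

/-- Removing an edge of a path in an acyclic graph disconnects the endpoints. -/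
lemma not_reachable_deleteEdges {V : Type} [DecidableEq V] {F : SimpleGraph V} (hF : F.IsAcyclic)
    {u v : V} (q : F.Walk u v) (hq : q.IsPath) {f : Sym2 V} (hf : f ∈ q.edges) :
    ¬ (F.deleteEdges {f}).Reachable u v := by
  rintro ⟨r⟩
  have hmem : ∀ e ∈ r.edges, e ∈ F.edgeSet := by
    intro e he
    have := r.edges_subset_edgeSet he
    rw [SimpleGraph.edgeSet_deleteEdges] at this
    exact this.1
  have hfe : f ∉ r.edges := by
    intro hfr
    have := r.edges_subset_edgeSet hfr
    rw [SimpleGraph.edgeSet_deleteEdges] at this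
    exact this.2 rfl
  set r2 : F.Walk u v := r.transfer F hmem with hr2
  have hr2e : r2.edges = r.edges := r.edges_transfer hmem
  have huniq : (⟨q, hq⟩ : F.Path u v) = r2.toPath := hF.path_unique _ _
  have : f ∈ (r2.toPath : F.Walk u v).edges := by
    rw [← huniq]; exact hf
  exact hfe (hr2e ▸ r2.edges_toPath_subset this)

lemma sum_exchange {α : Type} [DecidableEq α] {e f : α} (w : α → ℝ) (S' S : Finset α)
    (hS' : S' = insert e (S.erase f)) (he : e ∉ S.erase f) (hf : f ∈ S) :
    ∑ x ∈ S', w x = ∑ x ∈ S, w x - w f + w e := by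
  rw [hS', Finset.sum_insert he, Finset.sum_erase_eq_sub hf]
  ring

lemma exchange {V : Type} [Fintype V] [DecidableEq V]
    {H Fi : SimpleGraph V} {w : Sym2 V → ℝ}
    (hmax : IsMaxSpanningForest H Fi w)
    {u v : V} (huv : H.Adj u v) (he : s(u,v) ∉ Fi.edgeSet)
    {A : Set V} (hu : u ∈ A) (hv : v ∉ A) :
    ∃ a b : V, Fi.Adj a b ∧ a ∈ A ∧ b ∉ A ∧ w s(u,v) ≤ w s(a,b) := by
  obtain ⟨⟨hle, hacy, hspan⟩, hopt⟩ := hmax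
  have hreach : Fi.Reachable u v := hspan u v huv.reachable
  obtain ⟨p⟩ := hreach
  set q : Fi.Path u v := p.toPath with hqdef
  obtain ⟨d, hd, hdA, hdB⟩ := (q : Fi.Walk u v).exists_boundary_dart A hu hv
  set a := d.fst
  set b := d.snd
  have fadj : Fi.Adj a b := d.adj
  refine ⟨a, b, fadj, hdA, hdB, ?_⟩
  set f : Sym2 V := s(a, b) with hfdef
  have hfq : f ∈ (q : Fi.Walk u v).edges := by
    exact List.mem_map_of_mem (f := SimpleGraph.Dart.edge) hd
  have hnr : ¬ (Fi.deleteEdges {f}).Reachable u v :=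
    not_reachable_deleteEdges hacy (q : Fi.Walk u v) q.2 hfq
  set K : SimpleGraph V := Fi.deleteEdges {f} with hKdef
  set F' : SimpleGraph V := K ⊔ SimpleGraph.fromEdgeSet {s(u,v)} with hF'def
  have hKle : K ≤ Fi := SimpleGraph.deleteEdges_le _
  -- Fi ≤ K ⊔ fromEdgeSet {f}
  have hFile : Fi ≤ K ⊔ SimpleGraph.fromEdgeSet {f} := by
    intro x y hxy
    by_cases hxf : s(x,y) = f
    · exact Or.inr ⟨hxf, hxy.ne⟩
    · exact Or.inl (by rw [hKdef, SimpleGraph.deleteEdges_adj]; exact ⟨hxy, hxf⟩)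
  have huvne : u ≠ v := huv.ne
  -- reachability from u,v to a,b in K
  have hsplit : (K.Reachable u a ∧ K.Reachable b v) ∨
      (K.Reachable u b ∧ K.Reachable a v) := by
    have := reachable_sup_edge K a b (Reachable.mono hFile ⟨(q : Fi.Walk u v)⟩)
    rcases this with h1 | h2 | h3
    · exact absurd h1 hnr
    · exact Or.inl h2
    · exact Or.inr h3
  -- F' reachability a b
  have hab : F'.Reachable a b := by
    have hKF' : K ≤ F' := le_sup_left
    have huvF' : F'.Adj u v := Or.inr ⟨rfl, huvne⟩
    rcases hsplit with ⟨h1, h2⟩ | ⟨h1, h2⟩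
    · exact (h1.mono hKF').symm.trans (huvF'.reachable.trans (h2.mono hKF').symm)
    · exact (h2.mono hKF').trans (huvF'.reachable.symm.trans (h1.mono hKF'))
  -- F' is a spanning forest of H
  have hSF : IsSpanningForest H F' := by
    refine ⟨?_, ?_, ?_⟩
    · refine sup_le (hKle.trans hle) ?_
      intro x y hxy
      rw [SimpleGraph.fromEdgeSet_adj, Set.mem_singleton_iff, Sym2.eq_iff] at hxy
      obtain ⟨hx, hne⟩ := hxy
      rcases hx with ⟨rfl, rfl⟩ | ⟨rfl, rfl⟩
      · exact huv
      · exact huv.symm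
    · rw [SimpleGraph.isAcyclic_iff_forall_adj_isBridge]
      intro x y hxy
      rw [SimpleGraph.isBridge_iff]
      have hxy2 : K.Adj x y ∨ (s(x,y) ∈ ({s(u,v)} : Set (Sym2 V)) ∧ x ≠ y) := by
        rw [← SimpleGraph.fromEdgeSet_adj, ← SimpleGraph.sup_adj]; exact hxy
      rcases hxy2 with hKxy | ⟨hxe, hne⟩
      · have hFixy : Fi.Adj x y := hKle hKxy
        intro hre
        have hsub : F' \ SimpleGraph.fromEdgeSet {s(x,y)} ≤
            (K.deleteEdges {s(x,y)}) ⊔ SimpleGraph.fromEdgeSet {s(u,v)} := by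
          intro x' y' hxy'
          obtain ⟨h1, h2⟩ := hxy'
          rcases h1 with hK' | hE'
          · left
            rw [SimpleGraph.deleteEdges_adj]
            exact ⟨hK', fun hc => h2 ⟨hc, (hKle hK').ne⟩⟩
          · exact Or.inr hE'
        have h3 := reachable_sup_edge (K.deleteEdges {s(x,y)}) u v (hre.mono hsub)
        have hK2le : K.deleteEdges {s(x,y)} ≤ K := SimpleGraph.deleteEdges_le _
        rcases h3 with h1 | ⟨h1, h2⟩ | ⟨h1, h2⟩
        · have hbr := (SimpleGraph.isAcyclic_iff_forall_adj_isBridge.mp hacy) hFixy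
          rw [SimpleGraph.isBridge_iff] at hbr
          have hmono : K.deleteEdges {s(x,y)} ≤ Fi \ SimpleGraph.fromEdgeSet {s(x,y)} :=
            SimpleGraph.deleteEdges_mono hKle
          exact hbr (h1.mono hmono)
        · exact hnr ((h1.mono hK2le).symm.trans
            ((hKxy.reachable).trans (h2.mono hK2le).symm))
        · exact hnr ((h2.mono hK2le).trans
            ((hKxy.symm.reachable).trans (h1.mono hK2le)))
      · rw [Set.mem_singleton_iff] at hxe
        intro hre
        have hsub : F' \ SimpleGraph.fromEdgeSet {s(x,y)} ≤ K := by
          intro x' y' h'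
          obtain ⟨h1, h2⟩ := h'
          rcases h1 with hK' | hE'
          · exact hK'
          · exact absurd ⟨by rw [hxe]; exact hE'.1, hE'.2⟩ h2
        have hKxy : K.Reachable x y := hre.mono hsub
        rw [Sym2.eq_iff] at hxe
        rcases hxe with ⟨rfl, rfl⟩ | ⟨rfl, rfl⟩
        · exact hnr hKxy
        · exact hnr hKxy.symm
    · intro x y hxy
      have hFixy := hspan x y hxy
      have h3 := reachable_sup_edge K a b (hFixy.mono hFile)
      have hKF' : K ≤ F' := le_sup_left
      rcases h3 with h1 | ⟨h1, h2⟩ | ⟨h1, h2⟩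
      · exact h1.mono hKF'
      · exact (h1.mono hKF').trans (hab.trans (h2.mono hKF'))
      · exact (h1.mono hKF').trans (hab.symm.trans (h2.mono hKF'))
  -- weight comparison
  have hfFi : f ∈ Fi.edgeSet := fadj
  have hedge : F'.edgeSet = (Fi.edgeSet \ {f}) ∪ {s(u,v)} := by
    rw [hF'def, SimpleGraph.edgeSet_sup, hKdef, SimpleGraph.edgeSet_deleteEdges,
      SimpleGraph.edgeSet_fromEdgeSet]
    ext e
    simp only [Set.mem_union, Set.mem_diff, Set.mem_singleton_iff, Set.mem_setOf_eq]
    constructor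
    · rintro (⟨h1, h2⟩ | ⟨h1, h2⟩)
      · exact Or.inl ⟨h1, h2⟩
      · exact Or.inr h1
    · rintro (⟨h1, h2⟩ | h1)
      · exact Or.inl ⟨h1, h2⟩
      · exact Or.inr ⟨h1, by simp [h1, huvne]⟩
  have hcalc : totalWeight F' w = totalWeight Fi w - w f + w s(u,v) := by
    simp only [totalWeight]
    refine sum_exchange w _ _ ?_ ?_ ?_
    · ext e
      simp only [Finset.mem_filter, Finset.mem_univ, true_and, Finset.mem_insert,
        Finset.mem_erase, hedge, Set.mem_union, Set.mem_diff, Set.mem_singleton_iff]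
      tauto
    · simp [Finset.mem_filter, he]
    · simp [Finset.mem_filter, hfFi]
  have hle' := hopt F' hSF
  rw [hcalc] at hle'
  linarith

/-- **Heaviness of edges left out by an MSF packing.**
If `(u,v)` is an edge of `G` contained in no forest of an `M`-partial MSF packing of `G`,
then `(u,v)` is `M·w(u,v)`-heavy in the subgraph of `G` consisting of the edges of weight
at least `w(u,v)`, and consequently also in `G` itself. -/
theorem stmt_3 {V : Type} [Fintype V] [DecidableEq V]
    (G : SimpleGraph V) (w : Sym2 V → ℝ)
    (hw : ∀ e ∈ G.edgeSet, 0 < w e)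
    (M : ℕ) (F : ℕ → SimpleGraph V) (hpack : IsMSFPacking G w M F)
    (u v : V) (huv : G.Adj u v)
    (hnot : ∀ i < M, s(u, v) ∉ (F i).edgeSet) :
    IsHeavy (G.deleteEdges {e' | w e' < w s(u, v)}) w u v ((M : ℝ) * w s(u, v)) ∧
    IsHeavy G w u v ((M : ℝ) * w s(u, v)) := by
  have part1 : IsHeavy (G.deleteEdges {e' | w e' < w s(u, v)}) w u v ((M : ℝ) * w s(u, v)) := by
    intro A hu hv
    have key : ∀ i : ℕ, ∃ a b : V, i < M →
        ((F i).Adj a b ∧ a ∈ A ∧ b ∉ A ∧ w s(u,v) ≤ w s(a,b)) := by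
      intro i
      by_cases hi : i < M
      · have hmax := hpack i hi
        have hHadj : (G.deleteEdges (⋃ j ∈ Finset.range i, (F j).edgeSet)).Adj u v := by
          rw [SimpleGraph.deleteEdges_adj]
          refine ⟨huv, ?_⟩
          intro hmem
          simp only [Set.mem_iUnion, exists_prop] at hmem
          obtain ⟨j, hj, hm⟩ := hmem
          exact hnot j ((Finset.mem_range.mp hj).trans hi) hm
        obtain ⟨a, b, h1, h2, h3, h4⟩ := exchange hmax hHadj (hnot i hi) hu hv
        exact ⟨a, b, fun _ => ⟨h1, h2, h3, h4⟩⟩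
      · exact ⟨u, u, fun h => absurd h hi⟩
    choose aa bb hh using key
    set g : ℕ → Sym2 V := fun i => s(aa i, bb i) with hg
    have hadj : ∀ i < M, (F i).Adj (aa i) (bb i) := fun i hi => (hh i hi).1
    have hAi : ∀ i < M, aa i ∈ A := fun i hi => (hh i hi).2.1
    have hBi : ∀ i < M, bb i ∉ A := fun i hi => (hh i hi).2.2.1
    have hwi : ∀ i < M, w s(u,v) ≤ w (g i) := fun i hi => (hh i hi).2.2.2
    have hFleG : ∀ i < M, (F i) ≤ G := fun i hi =>
      ((hpack i hi).1.1).trans (SimpleGraph.deleteEdges_le _)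
    have hginG : ∀ i < M, g i ∈ G.edgeSet := fun i hi =>
      (hFleG i hi) (hadj i hi)
    have hinj : ∀ i j, i < j → j < M → g i ≠ g j := by
      intro i j hij hj heq
      have h1 : g j ∈ (G.deleteEdges (⋃ k ∈ Finset.range j, (F k).edgeSet)).edgeSet :=
        (hpack j hj).1.1 (hadj j hj)
      rw [SimpleGraph.edgeSet_deleteEdges] at h1
      apply h1.2
      simp only [Set.mem_iUnion, exists_prop]
      exact ⟨i, Finset.mem_range.mpr hij, heq ▸ (hadj i (hij.trans hj))⟩
    set T : Finset (Sym2 V) := (Finset.range M).image g with hT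
    have hcard : T.card = M := by
      rw [hT, Finset.card_image_of_injOn, Finset.card_range]
      intro i hi j hj hgij
      simp only [Finset.coe_range, Set.mem_Iio] at hi hj
      by_contra hne
      rcases lt_or_gt_of_ne hne with h | h
      · exact hinj i j h hj hgij
      · exact hinj j i h hi hgij.symm
    have hsum2 : (M : ℝ) * w s(u,v) ≤ ∑ t ∈ T, w t := by
      have hbound : ∀ t ∈ T, w s(u,v) ≤ w t := by
        intro t ht
        obtain ⟨i, hi, rfl⟩ := Finset.mem_image.mp ht
        exact hwi i (Finset.mem_range.mp hi)
      calc (M : ℝ) * w s(u,v) = T.card • w s(u,v) := by rw [hcard, nsmul_eq_mul]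
        _ ≤ ∑ t ∈ T, w t := Finset.card_nsmul_le_sum T w _ hbound
    have hsum1 : ∑ t ∈ T, w t ≤
        graphCutWeight (G.deleteEdges {e' | w e' < w s(u, v)}) w A := by
      simp only [graphCutWeight]
      refine Finset.sum_le_sum_of_subset_of_nonneg ?_ ?_
      · intro t ht
        obtain ⟨i, hi, rfl⟩ := Finset.mem_image.mp ht
        rw [Finset.mem_range] at hi
        simp only [Finset.mem_filter]
        refine ⟨Finset.mem_univ _, ?_, ⟨aa i, bb i, rfl, hAi i hi, hBi i hi⟩⟩
        rw [SimpleGraph.edgeSet_deleteEdges]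
        exact ⟨hginG i hi, fun hc => absurd (hwi i hi) (not_le.mpr hc)⟩
      · intro t ht _
        simp only [Finset.mem_filter] at ht
        have h2 := ht.2.1
        rw [SimpleGraph.edgeSet_deleteEdges] at h2
        exact (hw t h2.1).le
    exact hsum2.trans hsum1
  refine ⟨part1, ?_⟩
  intro A hu hv
  refine (part1 A hu hv).trans ?_
  simp only [graphCutWeight]
  refine Finset.sum_le_sum_of_subset_of_nonneg ?_ ?_
  · intro t ht
    simp only [Finset.mem_filter] at ht ⊢
    refine ⟨ht.1, ?_, ht.2.2⟩
    have h2 := ht.2.1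
    rw [SimpleGraph.edgeSet_deleteEdges] at h2
    exact h2.1
  · intro t ht _
    rw [Finset.mem_filter] at ht
    exact (hw t ht.2.1).le
end

section
/- Let G = (V, E, w) be a finite weighted graph with maximum vertex degree Δ, and let F_1, …, F_M be an M-partial maximum spanning forest packing of G with M ≥ Δ. Then F_1 ∪ … ∪ F_M = E, i.e., every edge of G belongs to some forest of the packing. -/
open scoped Classical

/-- The degree of a vertex `v` in `G`: the number of edges of `G` incident to `v`. -/
noncomputable def degAt {V : Type} [Fintype V] [DecidableEq V]
    (G : SimpleGraph V) (v : V) : ℕ :=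
  (Finset.univ.filter (fun e : Sym2 V => e ∈ G.edgeSet ∧ v ∈ e)).card

lemma degAt_mono {V : Type} [Fintype V] [DecidableEq V] {G H : SimpleGraph V}
    (h : H ≤ G) (v : V) : degAt H v ≤ degAt G v := by
  apply Finset.card_le_card
  intro e he
  simp only [Finset.mem_filter, Finset.mem_univ, true_and] at *
  exact ⟨SimpleGraph.edgeSet_mono h he.1, he.2⟩

lemma degAt_step {V : Type} [Fintype V] [DecidableEq V]
    {H Fo : SimpleGraph V} (hsf : IsSpanningForest H Fo) {v : V}
    (hv : 0 < degAt H v) :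
    degAt (H.deleteEdges Fo.edgeSet) v < degAt H v := by
  obtain ⟨e, he⟩ := Finset.card_pos.mp hv
  simp only [Finset.mem_filter, Finset.mem_univ, true_and] at he
  obtain ⟨heH, hve⟩ := he
  -- get a neighbor u of v in H
  obtain ⟨u, hadj⟩ : ∃ u, H.Adj v u := by
    induction e with
    | h a b =>
      rw [SimpleGraph.mem_edgeSet] at heH
      rcases Sym2.mem_iff.mp hve with h | h
      · exact ⟨b, h ▸ heH⟩
      · exact ⟨a, h ▸ heH.symm⟩
  have hreach : Fo.Reachable v u := hsf.2.2 v u hadj.reachable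
  obtain ⟨p⟩ := hreach
  have hnil : ¬ p.Nil := SimpleGraph.Walk.not_nil_of_ne hadj.ne
  have hFadj : Fo.Adj v (p.getVert 1) := p.adj_snd hnil
  apply Finset.card_lt_card
  constructor
  · intro e' he'
    simp only [Finset.mem_filter, Finset.mem_univ, true_and,
      SimpleGraph.edgeSet_deleteEdges, Set.mem_diff] at *
    exact ⟨he'.1.1, he'.2⟩
  · intro hsub
    have : s(v, p.getVert 1) ∈ Finset.univ.filter
        (fun e : Sym2 V => e ∈ H.edgeSet ∧ v ∈ e) := by
      simp only [Finset.mem_filter, Finset.mem_univ, true_and]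
      exact ⟨hsf.1 hFadj, Sym2.mem_mk_left _ _⟩
    have := hsub this
    simp only [Finset.mem_filter, Finset.mem_univ, true_and,
      SimpleGraph.edgeSet_deleteEdges, Set.mem_diff] at this
    exact this.1.2 hFadj

/-- **An MSF packing with `M ≥ Δ` forests covers all edges.**
If `F 0, …, F (M-1)` is an `M`-partial MSF packing of `G` and `M` is at least the
maximum degree of `G`, then the union of the forests' edge sets is the whole edge
set of `G`. -/
theorem stmt_4 {V : Type} [Fintype V] [DecidableEq V]
    (G : SimpleGraph V) (w : Sym2 V → ℝ)
    (hw : ∀ e ∈ G.edgeSet, 0 < w e)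
    (M : ℕ) (F : ℕ → SimpleGraph V) (hpack : IsMSFPacking G w M F)
    (hM : ∀ v : V, degAt G v ≤ M) :
    (⋃ i ∈ Finset.range M, (F i).edgeSet) = G.edgeSet := by
  have key : ∀ i ≤ M, ∀ v,
      degAt (G.deleteEdges (⋃ j ∈ Finset.range i, (F j).edgeSet)) v ≤ degAt G v - i := by
    intro i
    induction i with
    | zero => intro _ v; simp [degAt_mono (SimpleGraph.deleteEdges_le _) v]
    | succ i ih =>
      intro hi v
      have hi' : i < M := hi
      have hstep : G.deleteEdges (⋃ j ∈ Finset.range (i+1), (F j).edgeSet)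
          = (G.deleteEdges (⋃ j ∈ Finset.range i, (F j).edgeSet)).deleteEdges
              (F i).edgeSet := by
        rw [SimpleGraph.deleteEdges_deleteEdges, Finset.range_add_one, Finset.set_biUnion_insert,
          Set.union_comm]
      rcases Nat.eq_zero_or_pos
          (degAt (G.deleteEdges (⋃ j ∈ Finset.range i, (F j).edgeSet)) v) with h0 | hpos
      · have h1 : degAt (G.deleteEdges (⋃ j ∈ Finset.range (i+1), (F j).edgeSet)) v
            ≤ degAt (G.deleteEdges (⋃ j ∈ Finset.range i, (F j).edgeSet)) v := by
          rw [hstep]; exact degAt_mono (SimpleGraph.deleteEdges_le _) v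
        omega
      · have hlt := degAt_step ((hpack i hi').1) hpos
        have hle := ih (le_of_lt hi') v
        rw [hstep]
        omega
  have hzero : ∀ v, degAt (G.deleteEdges (⋃ j ∈ Finset.range M, (F j).edgeSet)) v = 0 := by
    intro v
    have := key M le_rfl v
    have := hM v
    omega
  apply Set.Subset.antisymm
  · intro e he
    simp only [Set.mem_iUnion] at he
    obtain ⟨i, hi, hei⟩ := he
    simp only [Finset.mem_coe, Finset.mem_range] at hi
    exact SimpleGraph.edgeSet_mono
      (le_trans (hpack i hi).1.1 (SimpleGraph.deleteEdges_le _)) hei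
  · intro e he
    by_contra hne
    have heD : e ∈ (G.deleteEdges (⋃ j ∈ Finset.range M, (F j).edgeSet)).edgeSet := by
      rw [SimpleGraph.edgeSet_deleteEdges]; exact ⟨he, hne⟩
    obtain ⟨v, hv⟩ : ∃ v, v ∈ e := by
      induction e with
      | h a b => exact ⟨a, Sym2.mem_mk_left _ _⟩
    have : 0 < degAt (G.deleteEdges (⋃ j ∈ Finset.range M, (F j).edgeSet)) v := by
      apply Finset.card_pos.mpr
      exact ⟨e, by simp only [Finset.mem_filter, Finset.mem_univ, true_and]; exact ⟨heD, hv⟩⟩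
    rw [hzero v] at this
    exact lt_irrefl 0 this
end

section
/- Let G = (V, E, w) be a finite weighted graph, let F be a maximum spanning forest of G, and let u, v be distinct vertices connected by a path in G. Let d be the minimum edge weight along the (unique) path from u to v in F. Then every path from u to v in G contains an edge of weight at most d. -/
open scoped Classical
open SimpleGraph

open SimpleGraph

lemma aux_decomp {V : Type} {H : SimpleGraph V} {x y : V} {s t : V}
    (r : (H ⊔ SimpleGraph.fromEdgeSet {s(x,y)}).Walk s t) :
    H.Reachable s t ∨ (H.Reachable s x ∧ H.Reachable y t) ∨
      (H.Reachable s y ∧ H.Reachable x t) := by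
  induction r with
  | nil => exact Or.inl (Reachable.refl _)
  | @cons s c t h r ih =>
    simp only [sup_adj, fromEdgeSet_adj, Set.mem_singleton_iff, Sym2.eq, Sym2.rel_iff',
      Prod.mk.injEq, Prod.swap_prod_mk] at h
    rcases h with hsc | ⟨(⟨rfl, rfl⟩ | ⟨rfl, rfl⟩), hne⟩
    · rcases ih with h1 | ⟨h2a, h2b⟩ | ⟨h3a, h3b⟩
      · exact Or.inl (hsc.reachable.trans h1)
      · exact Or.inr (Or.inl ⟨hsc.reachable.trans h2a, h2b⟩)
      · exact Or.inr (Or.inr ⟨hsc.reachable.trans h3a, h3b⟩)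
    · rcases ih with h1 | ⟨h2a, h2b⟩ | ⟨h3a, h3b⟩
      · exact Or.inr (Or.inl ⟨Reachable.refl _, h1⟩)
      · exact Or.inl (h2a.symm.trans h2b)
      · exact Or.inl h3b
    · rcases ih with h1 | ⟨h2a, h2b⟩ | ⟨h3a, h3b⟩
      · exact Or.inr (Or.inr ⟨Reachable.refl _, h1⟩)
      · exact Or.inl h2b
      · exact Or.inl (h3a.symm.trans h3b)

lemma aux_cross {V : Type} {G H : SimpleGraph V} {u : V} {c v : V} (q : G.Walk c v) :
    H.Reachable u c → ¬H.Reachable u v →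
      ∃ a b, s(a,b) ∈ q.edges ∧ G.Adj a b ∧ H.Reachable u a ∧ ¬H.Reachable u b := by
  induction q with
  | nil => exact fun hc hv => absurd hc hv
  | @cons c m v h q ih =>
    intro hc hv
    by_cases hm : H.Reachable u m
    · obtain ⟨a, b, hab, h1, h2, h3⟩ := ih hm hv
      exact ⟨a, b, by simp [hab], h1, h2, h3⟩
    · exact ⟨c, m, by simp, h, hc, hm⟩

lemma aux_acyclic_mono {V : Type} {H K : SimpleGraph V} (hle : H ≤ K)
    (hK : K.IsAcyclic) : H.IsAcyclic := by
  intro v c hc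
  exact hK (c.transfer K (fun e he => edgeSet_mono hle (c.edges_subset_edgeSet he)))
    (hc.transfer _)

lemma aux_acyclic_sup {V : Type} {H : SimpleGraph V} (hH : H.IsAcyclic) {a b : V}
    (hne : a ≠ b) (hab : ¬H.Reachable a b) :
    (H ⊔ SimpleGraph.fromEdgeSet {s(a,b)}).IsAcyclic := by
  intro v c hc
  by_cases he : s(a,b) ∈ c.edges
  · have := (adj_and_reachable_delete_edges_iff_exists_cycle (G := H ⊔ fromEdgeSet {s(a,b)})
      (v := a) (w := b)).mpr ⟨v, c, hc, he⟩
    refine hab (this.2.mono ?_)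
    intro s t hst
    simp only [deleteEdges_adj, sdiff_adj, sup_adj, fromEdgeSet_adj, Set.mem_singleton_iff] at hst
    rcases hst with ⟨hl | hr, hnot⟩
    · exact hl
    · exact absurd hr.1 hnot
  · refine hH (c.transfer H ?_) (hc.transfer _)
    intro e hec
    have := c.edges_subset_edgeSet hec
    rw [edgeSet_sup, edgeSet_fromEdgeSet] at this
    rcases this with h1 | h2
    · exact h1
    · exact absurd h2.1 (by rintro rfl; exact he hec)

lemma aux_main {V : Type} [Fintype V] [DecidableEq V]
    (G : SimpleGraph V) (w : Sym2 V → ℝ)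
    (F : SimpleGraph V) (hleG : F ≤ G) (hac : F.IsAcyclic)
    (hspan : ∀ s t : V, G.Reachable s t → F.Reachable s t)
    (hmax : ∀ F' : SimpleGraph V, IsSpanningForest G F' → totalWeight F' w ≤ totalWeight F w)
    (u v x y : V) (d : ℝ) (hxy : F.Adj x y) (hwxy : w s(x,y) = d)
    (hux : (F \ SimpleGraph.fromEdgeSet {s(x,y)}).Reachable u x)
    (hyv : (F \ SimpleGraph.fromEdgeSet {s(x,y)}).Reachable y v)
    (q : G.Walk u v) (hq : ∀ e ∈ q.edges, d < w e) : False := by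
  set F' := F \ SimpleGraph.fromEdgeSet {s(x,y)} with hF'def
  have hF'le : F' ≤ F := sdiff_le
  have hbridge : ¬F'.Reachable x y := by
    have := isAcyclic_iff_forall_adj_isBridge.mp hac hxy
    exact isBridge_iff.mp this
  have hnuv : ¬F'.Reachable u v := fun h => hbridge ((hux.symm.trans h).trans hyv.symm)
  -- F is below F' with the edge added back
  have hleSup : F ≤ F' ⊔ SimpleGraph.fromEdgeSet {s(x,y)} := by
    intro s t hst
    by_cases he : s(s,t) = s(x,y)
    · exact Or.inr ((fromEdgeSet_adj _).mpr ⟨he, hst.ne⟩)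
    · exact Or.inl ((sdiff_adj _ _ _ _).mpr ⟨hst, fun h => he ((fromEdgeSet_adj _).mp h).1⟩)
  have hdecomp : ∀ s t : V, F.Reachable s t →
      F'.Reachable s t ∨ (F'.Reachable s x ∧ F'.Reachable y t) ∨
        (F'.Reachable s y ∧ F'.Reachable x t) := fun s t h =>
    (h.mono hleSup).elim fun r => aux_decomp r
  -- find crossing edge
  obtain ⟨a, b, habq, hGab, hua, hub⟩ := aux_cross (H := F') q (Reachable.refl u) hnuv
  have hdab : d < w s(a,b) := hq _ habq
  have hne' : s(a,b) ≠ s(x,y) := fun h => by rw [h, hwxy] at hdab; exact lt_irrefl _ hdab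
  have habne : a ≠ b := hGab.ne
  -- b is in y's component
  have hby : F'.Reachable y b := by
    have hFub : F.Reachable u b := hspan u b ⟨(q.takeUntil b (q.snd_mem_support_of_mem_edges habq))⟩
    rcases hdecomp u b hFub with h1 | ⟨h2a, h2b⟩ | ⟨h3a, h3b⟩
    · exact absurd h1 hub
    · exact h2b
    · exact absurd (hux.trans h3b) hub
  have hnab : ¬F'.Reachable a b := fun h => hub (hua.trans h)
  have he'F : s(a,b) ∉ F.edgeSet := by
    intro h
    have : F'.Adj a b := (sdiff_adj _ _ _ _).mpr ⟨h, fun hh => hne' ((fromEdgeSet_adj _).mp hh).1⟩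
    exact hnab this.reachable
  set F'' := F' ⊔ SimpleGraph.fromEdgeSet {s(a,b)} with hF''def
  have hsf : IsSpanningForest G F'' := by
    refine ⟨sup_le (hF'le.trans hleG) ?_, aux_acyclic_sup (aux_acyclic_mono hF'le hac) habne hnab, ?_⟩
    · intro s t hst
      rcases (fromEdgeSet_adj _).mp hst with ⟨he, hne⟩
      rw [Set.mem_singleton_iff] at he
      rw [Sym2.eq_iff] at he
      rcases he with ⟨rfl, rfl⟩ | ⟨rfl, rfl⟩
      · exact hGab
      · exact hGab.symm
    · intro s t hst
      have hxyF'' : F''.Reachable x y := by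
        have h1 : F''.Reachable x a := (hux.symm.trans hua).mono le_sup_left
        have h2 : F''.Adj a b := Or.inr ((fromEdgeSet_adj _).mpr ⟨rfl, habne⟩)
        have h3 : F''.Reachable b y := hby.symm.mono le_sup_left
        exact (h1.trans h2.reachable).trans h3
      rcases hdecomp s t (hspan s t hst) with h1 | ⟨h2a, h2b⟩ | ⟨h3a, h3b⟩
      · exact h1.mono le_sup_left
      · exact ((h2a.mono le_sup_left).trans hxyF'').trans (h2b.mono le_sup_left)
      · exact ((h3a.mono le_sup_left).trans hxyF''.symm).trans (h3b.mono le_sup_left)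
  -- weight computation
  have hxyF : s(x,y) ∈ F.edgeSet := hxy
  clear_value F'' F'
  have hfilter : (Finset.univ.filter (fun e : Sym2 V => e ∈ F''.edgeSet)) =
      insert s(a,b) ((Finset.univ.filter (fun e : Sym2 V => e ∈ F.edgeSet)).erase s(x,y)) := by
    ext e
    simp only [Finset.mem_filter, Finset.mem_univ, true_and, Finset.mem_insert, Finset.mem_erase,
      hF''def, edgeSet_sup, edgeSet_fromEdgeSet, hF'def, edgeSet_sdiff,
      edgeSet_sdiff_sdiff_isDiag, Set.mem_union, Set.mem_diff, Set.mem_singleton_iff,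
      Set.mem_setOf_eq]
    constructor
    · rintro (⟨h1, h2⟩ | ⟨h1, h2⟩)
      · exact Or.inr ⟨h2, h1⟩
      · exact Or.inl h1
    · rintro (rfl | ⟨h1, h2⟩)
      · exact Or.inr ⟨rfl, fun h => habne (Sym2.isDiag_iff_proj_eq |>.mp h)⟩
      · exact Or.inl ⟨h2, h1⟩
  have hweight : totalWeight F'' w = w s(a,b) + (totalWeight F w - d) := by
    rw [totalWeight, hfilter, Finset.sum_insert, Finset.sum_erase_eq_sub, hwxy, totalWeight]
    · simp only [Finset.mem_filter, Finset.mem_univ, true_and]; exact hxyF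
    · intro h
      exact he'F (Finset.mem_filter.mp (Finset.mem_of_mem_erase h)).2
  have := hmax F'' hsf
  rw [hweight] at this
  linarith

 /-- **Min-weight edge on the MSF path is a bottleneck.**
Let `F` be a maximum spanning forest of `G`, let `u ≠ v` be connected in `G`, let `p`
be the (unique) path from `u` to `v` in `F`, and let `d` be the minimum edge weight
along `p`.  Then every path from `u` to `v` in `G` contains an edge of weight at
most `d`. -/
theorem stmt_5 {V : Type} [Fintype V] [DecidableEq V]
    (G : SimpleGraph V) (w : Sym2 V → ℝ)
    (hw : ∀ e ∈ G.edgeSet, 0 < w e)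
    (F : SimpleGraph V) (hF : IsMaxSpanningForest G F w)
    (u v : V) (hne : u ≠ v) (hreach : G.Reachable u v)
    (p : F.Walk u v) (hp : p.IsPath)
    (d : ℝ) (hd_mem : ∃ e ∈ p.edges, w e = d) (hd_min : ∀ e ∈ p.edges, d ≤ w e) :
    ∀ q : G.Walk u v, q.IsPath → ∃ e ∈ q.edges, w e ≤ d := by
  intro q hq'
  by_contra hcon
  push_neg at hcon
  obtain ⟨⟨hleG, hac, hspan⟩, hmax⟩ := hF
  obtain ⟨e₀, he₀p, he₀w⟩ := hd_mem
  revert he₀p he₀w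
  induction e₀ using Sym2.ind with
  | _ x y =>
  intro he₀p he₀w
  have hxy : F.Adj x y := p.edges_subset_edgeSet he₀p
  have hnuv : ¬(F \ SimpleGraph.fromEdgeSet {s(x,y)}).Reachable u v := by
    rintro ⟨r⟩
    have hsub : ∀ e ∈ r.edges, e ∈ F.edgeSet := fun e he => by
      have := r.edges_subset_edgeSet he
      rw [edgeSet_sdiff, edgeSet_fromEdgeSet, edgeSet_sdiff_sdiff_isDiag] at this
      exact this.1
    have hpath := hac.path_unique (r.transfer F hsub).toPath ⟨p, hp⟩
    have hmem : s(x,y) ∈ ((r.transfer F hsub).toPath : F.Walk u v).edges := by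
      rw [hpath]; exact he₀p
    have hmem2 : s(x,y) ∈ (r.transfer F hsub).edges :=
      Walk.edges_toPath_subset _ hmem
    rw [Walk.edges_transfer] at hmem2
    have := r.edges_subset_edgeSet hmem2
    rw [edgeSet_sdiff, edgeSet_fromEdgeSet, edgeSet_sdiff_sdiff_isDiag] at this
    exact this.2 rfl
  have hsup : F ≤ (F \ SimpleGraph.fromEdgeSet {s(x,y)}) ⊔ SimpleGraph.fromEdgeSet {s(x,y)} := by
    intro s t hst
    by_cases he : s(s,t) = s(x,y)
    · exact Or.inr ((fromEdgeSet_adj _).mpr ⟨he, hst.ne⟩)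
    · exact Or.inl ((sdiff_adj _ _ _ _).mpr ⟨hst, fun h => he ((fromEdgeSet_adj _).mp h).1⟩)
  have hdec := (SimpleGraph.Reachable.mono hsup ⟨p⟩).elim fun r => aux_decomp r
  rcases hdec with h1 | ⟨hux, hyv⟩ | ⟨huy, hxv⟩
  · exact hnuv h1
  · exact aux_main G w F hleG hac hspan hmax u v x y d hxy he₀w hux hyv q hcon
  · exact aux_main G w F hleG hac hspan hmax u v y x d hxy.symm
      (by rwa [Sym2.eq_swap]) (by rwa [Sym2.eq_swap]) (by rwa [Sym2.eq_swap]) q hcon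
end

section
/- For every real x ∈ (0,1] and every integer k ≥ 0, the following two inequalities hold: ∏_{i=0}^{k} (1 + (x/13)·2^{−i/2}) ≤ 1 + x/3, and ∏_{i=0}^{k} (1 − (x/13)·2^{−i/2}) ≥ 1 − x/3. -/
private lemma aux_prod_le (s : Finset ℕ) (a : ℕ → ℝ) (h0 : ∀ i, 0 ≤ a i)
    (h1 : ∑ i ∈ s, a i ≤ 1) :
    ∏ i ∈ s, (1 + a i) ≤ 1 + (∑ i ∈ s, a i) + (∑ i ∈ s, a i) ^ 2 := by
  induction s using Finset.cons_induction with
  | empty => simp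
  | cons j s hj ih =>
    rw [Finset.sum_cons] at h1 ⊢
    rw [Finset.prod_cons]
    have hS : 0 ≤ ∑ i ∈ s, a i := Finset.sum_nonneg fun i _ => h0 i
    have hS1 : ∑ i ∈ s, a i ≤ 1 := by linarith [h0 j]
    have := ih hS1
    have haj := h0 j
    nlinarith [mul_nonneg haj hS, sq_nonneg (∑ i ∈ s, a i)]

private lemma aux_prod_ge (s : Finset ℕ) (a : ℕ → ℝ) (h0 : ∀ i, 0 ≤ a i)
    (h1 : ∀ i, a i ≤ 1) :
    1 - (∑ i ∈ s, a i) ≤ ∏ i ∈ s, (1 - a i) := by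
  induction s using Finset.cons_induction with
  | empty => simp
  | cons j s hj ih =>
    rw [Finset.sum_cons, Finset.prod_cons]
    have hS : 0 ≤ ∑ i ∈ s, a i := Finset.sum_nonneg fun i _ => h0 i
    have h1a : 0 ≤ 1 - a j := by linarith [h1 j]
    calc 1 - (a j + ∑ i ∈ s, a i) ≤ (1 - a j) * (1 - ∑ i ∈ s, a i) := by
          nlinarith [mul_nonneg (h0 j) hS]
      _ ≤ (1 - a j) * ∏ i ∈ s, (1 - a i) := mul_le_mul_of_nonneg_left ih h1a

/-- **Error accumulation lemma.**
For every real `x ∈ (0,1]` and every integer `k ≥ 0`: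
`∏_{i=0}^{k} (1 + (x/13)·2^{−i/2}) ≤ 1 + x/3` and
`∏_{i=0}^{k} (1 − (x/13)·2^{−i/2}) ≥ 1 − x/3`,
where `2^{−i/2}` is the real power. -/
theorem stmt_6 (x : ℝ) (hx0 : 0 < x) (hx1 : x ≤ 1) (k : ℕ) :
    (∏ i ∈ Finset.range (k + 1), (1 + (x / 13) * (2 : ℝ) ^ (-(i : ℝ) / 2)) ≤ 1 + x / 3) ∧
    (∏ i ∈ Finset.range (k + 1), (1 - (x / 13) * (2 : ℝ) ^ (-(i : ℝ) / 2)) ≥ 1 - x / 3) := by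
  set r : ℝ := (2 : ℝ) ^ (-(1 : ℝ) / 2) with hr
  have hrpos : 0 < r := Real.rpow_pos_of_pos (by norm_num) _
  have hrval : r = (Real.sqrt 2)⁻¹ := by
    rw [hr, neg_div, Real.rpow_neg (by norm_num), Real.sqrt_eq_rpow]
  have hsqrt : (1414/1000 : ℝ) ≤ Real.sqrt 2 := by
    rw [show (1414/1000 : ℝ) = Real.sqrt ((1414/1000 : ℝ) ^ 2) by
      rw [Real.sqrt_sq]; norm_num]
    exact Real.sqrt_le_sqrt (by norm_num)
  have hrlt : r ≤ (7075/10000 : ℝ) := by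
    rw [hrval]
    rw [inv_le_comm₀ (by positivity) (by norm_num)]
    calc ((7075/10000 : ℝ) : ℝ)⁻¹ ≤ (1414/1000 : ℝ) := by norm_num
      _ ≤ Real.sqrt 2 := hsqrt
  have hpow : ∀ i : ℕ, (2 : ℝ) ^ (-(i : ℝ) / 2) = r ^ i := by
    intro i
    rw [hr, ← Real.rpow_natCast ((2:ℝ) ^ (-(1:ℝ)/2)) i, ← Real.rpow_mul (by norm_num)]
    ring_nf
  have hr1 : r < 1 := by linarith
  -- geometric sum bound
  have h1r : (0:ℝ) < 1 - r := by linarith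
  have hgeom : ∑ i ∈ Finset.range (k + 1), r ^ i ≤ 1 / (1 - r) := by
    rw [geom_sum_eq (ne_of_lt hr1)]
    have h2 : (0:ℝ) ≤ r ^ (k+1) := by positivity
    have heq : (r ^ (k+1) - 1) / (r - 1) = (1 - r ^ (k+1)) / (1 - r) := by
      rw [← neg_div_neg_eq]; congr 1 <;> ring
    rw [heq, div_le_div_iff₀ h1r h1r]
    nlinarith
  set a : ℕ → ℝ := fun i => (x / 13) * r ^ i with ha
  have ha0 : ∀ i, 0 ≤ a i := fun i => by positivity
  have hS : ∑ i ∈ Finset.range (k + 1), a i ≤ x / 13 * (1 / (1 - r)) := by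
    rw [ha, ← Finset.mul_sum]
    exact mul_le_mul_of_nonneg_left hgeom (by positivity)
  have hSle : ∑ i ∈ Finset.range (k + 1), a i ≤ (263/1000 : ℝ) * x := by
    refine hS.trans ?_
    have hinv : 1 / (1 - r) ≤ (10000/2925 : ℝ) := by
      rw [div_le_div_iff₀ h1r (by norm_num)]; linarith
    calc x / 13 * (1 / (1 - r)) ≤ x / 13 * (10000/2925 : ℝ) :=
          mul_le_mul_of_nonneg_left hinv (by positivity)
      _ ≤ (263/1000 : ℝ) * x := by linarith
  have hS0 : 0 ≤ ∑ i ∈ Finset.range (k + 1), a i := Finset.sum_nonneg fun i _ => ha0 i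
  have hS1 : ∑ i ∈ Finset.range (k + 1), a i ≤ 1 := by nlinarith
  constructor
  · have h := aux_prod_le (Finset.range (k + 1)) a ha0 hS1
    calc ∏ i ∈ Finset.range (k + 1), (1 + (x / 13) * (2 : ℝ) ^ (-(i : ℝ) / 2))
        = ∏ i ∈ Finset.range (k + 1), (1 + a i) := by
          refine Finset.prod_congr rfl fun i _ => by rw [ha, hpow i]
      _ ≤ 1 + (∑ i ∈ Finset.range (k+1), a i) + (∑ i ∈ Finset.range (k+1), a i) ^ 2 := h
      _ ≤ 1 + x / 3 := by nlinarith [sq_nonneg (∑ i ∈ Finset.range (k+1), a i)]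
  · have ha1 : ∀ i, a i ≤ 1 := by
      intro i
      have h1 : r ^ i ≤ 1 := pow_le_one₀ (le_of_lt hrpos) (le_of_lt hr1)
      have h2 : a i ≤ x / 13 * 1 := by
        rw [ha]; exact mul_le_mul_of_nonneg_left h1 (by positivity)
      linarith
    have h := aux_prod_ge (Finset.range (k + 1)) a ha0 ha1
    calc ∏ i ∈ Finset.range (k + 1), (1 - (x / 13) * (2 : ℝ) ^ (-(i : ℝ) / 2))
        = ∏ i ∈ Finset.range (k + 1), (1 - a i) := by
          refine Finset.prod_congr rfl fun i _ => by rw [ha, hpow i]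
      _ ≥ 1 - (∑ i ∈ Finset.range (k+1), a i) := h
      _ ≥ 1 - x / 3 := by nlinarith
end

section
/- Let Λ ≥ 2 and Γ ≥ 1 be integers and let b : {0,…,Γ} × ℕ → ℝ be nonnegative with ∑_{k'=0}^{∞} b(j',k') < ∞ for every j'. Then ∑_{i=2}^{Λ} ∑_{j=1}^{min(⌊i/2⌋, Γ)} ∑_{j'=j−1}^{Γ} ∑_{k'=i−2j}^{∞} 2^{−k'−j'+i+1} · b(j',k') ≤ (64/3) · ∑_{j'=0}^{Γ} 2^{j'} · ∑_{k'=0}^{∞} b(j',k'). -/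
private lemma geom4_aux (n : ℕ) : ∑ j ∈ Finset.Icc 1 n, (4:ℝ)^j ≤ 4^(n+1)/3 := by
  calc ∑ j ∈ Finset.Icc 1 n, (4:ℝ)^j ≤ ∑ j ∈ Finset.range (n+1), (4:ℝ)^j := by
        apply Finset.sum_le_sum_of_subset_of_nonneg
        · intro x hx; simp only [Finset.mem_Icc] at hx; simp only [Finset.mem_range]; omega
        · intros; positivity
    _ = ((4:ℝ)^(n+1) - 1)/(4-1) := geom_sum_eq (by norm_num) _
    _ ≤ 4^(n+1)/3 := by
        rw [div_le_div_iff₀ (by norm_num) (by norm_num)]; ring_nf; nlinarith [pow_pos (show (0:ℝ) < 4 by norm_num) (n+1)]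

private lemma summ_aux (b : ℕ → ℝ) (hb : ∀ k, 0 ≤ b k) (hs : Summable b) (a c : ℤ)
    (P : ℕ → Prop) [DecidablePred P] :
    Summable (fun k : ℕ => if P k then (2:ℝ)^(-(k:ℤ) - a + c + 1) * b k else 0) := by
  apply Summable.of_nonneg_of_le (f := fun k => (2:ℝ)^(-a + c + 1) * b k)
  · intro k; split_ifs with h
    · exact mul_nonneg (by positivity) (hb k)
    · exact le_refl 0
  · intro k; split_ifs with h
    · apply mul_le_mul_of_nonneg_right _ (hb k)
      apply zpow_le_zpow_right₀ one_le_two; omega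
    · exact mul_nonneg (by positivity) (hb k)
  · exact hs.mul_left _

private lemma summ_aux' (b : ℕ → ℝ) (hb : ∀ k, 0 ≤ b k) (hs : Summable b) (j' i j : ℕ) :
    Summable (fun k' : ℕ => if 2*j ≤ i ∧ i ≤ k' + 2*j then
      (2:ℝ)^(-(k':ℤ) - (j':ℤ) + (i:ℤ) + 1) * b k' else 0) :=
  summ_aux b hb hs (j':ℤ) (i:ℤ) (fun k' => 2*j ≤ i ∧ i ≤ k' + 2*j)

private lemma lemA (Λ j j' k' : ℕ) :
    ∑ i ∈ Finset.Icc 2 Λ, (if 2*j ≤ i ∧ i ≤ k' + 2*j then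
        (2:ℝ)^(-(k':ℤ) - (j':ℤ) + (i:ℤ) + 1) else 0)
      ≤ (2:ℝ)^(2*(j:ℤ) - (j':ℤ) + 2) := by
  calc ∑ i ∈ Finset.Icc 2 Λ, (if 2*j ≤ i ∧ i ≤ k' + 2*j then
        (2:ℝ)^(-(k':ℤ) - (j':ℤ) + (i:ℤ) + 1) else 0)
      = (2:ℝ)^(-(k':ℤ) - (j':ℤ) + 1) *
        ∑ i ∈ Finset.Icc 2 Λ, (if 2*j ≤ i ∧ i ≤ k' + 2*j then (2:ℝ)^i else 0) := by
        rw [Finset.mul_sum]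
        refine Finset.sum_congr rfl fun i _ => ?_
        rw [mul_ite, mul_zero]
        split_ifs with h
        · rw [← zpow_natCast (2:ℝ) i, ← zpow_add₀ (two_ne_zero)]
          congr 1; ring
        · rfl
    _ ≤ (2:ℝ)^(-(k':ℤ) - (j':ℤ) + 1) * (2:ℝ)^(k' + 2*j + 1) := by
        apply mul_le_mul_of_nonneg_left _ (by positivity)
        calc ∑ i ∈ Finset.Icc 2 Λ, (if 2*j ≤ i ∧ i ≤ k' + 2*j then (2:ℝ)^i else 0)
            = ∑ i ∈ (Finset.Icc 2 Λ).filter (fun i => 2*j ≤ i ∧ i ≤ k' + 2*j), (2:ℝ)^i :=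
              (Finset.sum_filter _ _).symm
          _ ≤ ∑ i ∈ Finset.range (k' + 2*j + 1), (2:ℝ)^i := by
              apply Finset.sum_le_sum_of_subset_of_nonneg
              · intro x hx
                simp only [Finset.mem_filter, Finset.mem_Icc] at hx
                simp only [Finset.mem_range]; omega
              · intros; positivity
          _ = ((2:ℝ)^(k' + 2*j + 1) - 1)/(2-1) := geom_sum_eq (by norm_num) _
          _ ≤ (2:ℝ)^(k' + 2*j + 1) := by
              rw [show (2:ℝ)-1 = 1 by norm_num, div_one]; linarith
    _ = (2:ℝ)^(2*(j:ℤ) - (j':ℤ) + 2) := by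
        rw [← zpow_natCast (2:ℝ) (k' + 2*j + 1), ← zpow_add₀ (two_ne_zero)]
        congr 1; push_cast; ring

/-- Let `Λ ≥ 2`, `Γ ≥ 1` be integers and `b : {0,…,Γ} × ℕ → ℝ` nonnegative with
`∑_{k'} b(j',k') < ∞` for every `j'`.  Then
`∑_{i=2}^{Λ} ∑_{j=1}^{min(⌊i/2⌋,Γ)} ∑_{j'=j−1}^{Γ} ∑_{k'=i−2j}^{∞} 2^{−k'−j'+i+1}·b(j',k')
  ≤ (64/3)·∑_{j'=0}^{Γ} 2^{j'}·∑_{k'=0}^{∞} b(j',k')`. -/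
theorem stmt_14 (Λ Γ : ℕ) (hΛ : 2 ≤ Λ) (hΓ : 1 ≤ Γ) (b : ℕ → ℕ → ℝ)
    (hb : ∀ j' k', 0 ≤ b j' k') (hsum : ∀ j', Summable (fun k' => b j' k')) :
    ∑ i ∈ Finset.Icc 2 Λ, ∑ j ∈ Finset.Icc 1 (min (i / 2) Γ),
      ∑ j' ∈ Finset.Icc (j - 1) Γ,
        ∑' k' : ℕ, (if i - 2 * j ≤ k' then
          (2 : ℝ) ^ (-(k' : ℤ) - (j' : ℤ) + (i : ℤ) + 1) * b j' k' else 0)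
      ≤ (64 / 3) * ∑ j' ∈ Finset.Icc 0 Γ, (2 : ℝ) ^ (j' : ℕ) * ∑' k' : ℕ, b j' k' := by
  set S : ℕ → ℝ := fun j' => ∑' k' : ℕ, b j' k' with hS
  have hS0 : ∀ j', 0 ≤ S j' := fun j' => tsum_nonneg (hb j')
  set F : ℕ → ℕ → ℝ := fun i j => ∑ j' ∈ Finset.Icc (j - 1) Γ,
        ∑' k' : ℕ, (if i - 2 * j ≤ k' then
          (2 : ℝ) ^ (-(k' : ℤ) - (j' : ℤ) + (i : ℤ) + 1) * b j' k' else 0) with hF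
  calc ∑ i ∈ Finset.Icc 2 Λ, ∑ j ∈ Finset.Icc 1 (min (i / 2) Γ), F i j
      = ∑ i ∈ Finset.Icc 2 Λ, ∑ j ∈ Finset.Icc 1 Γ, (if 2*j ≤ i then F i j else 0) := by
        refine Finset.sum_congr rfl fun i _ => ?_
        rw [← Finset.sum_filter]
        refine Finset.sum_congr ?_ (fun _ _ => rfl)
        ext j
        simp only [Finset.mem_filter, Finset.mem_Icc, le_min_iff, Nat.le_div_iff_mul_le two_pos]
        omega
    _ = ∑ j ∈ Finset.Icc 1 Γ, ∑ i ∈ Finset.Icc 2 Λ, (if 2*j ≤ i then F i j else 0) :=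
        Finset.sum_comm
    _ ≤ ∑ j ∈ Finset.Icc 1 Γ, ∑ j' ∈ Finset.Icc (j - 1) Γ,
          (2:ℝ)^(2*(j:ℤ) - (j':ℤ) + 2) * S j' := by
        refine Finset.sum_le_sum fun j hj => ?_
        calc ∑ i ∈ Finset.Icc 2 Λ, (if 2*j ≤ i then F i j else 0)
            = ∑ i ∈ Finset.Icc 2 Λ, ∑ j' ∈ Finset.Icc (j - 1) Γ,
                (if 2*j ≤ i then ∑' k' : ℕ, (if i - 2 * j ≤ k' then
                  (2 : ℝ) ^ (-(k' : ℤ) - (j' : ℤ) + (i : ℤ) + 1) * b j' k' else 0) else 0) := by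
              refine Finset.sum_congr rfl fun i _ => ?_
              rw [hF]; split_ifs with h <;> simp
          _ = ∑ j' ∈ Finset.Icc (j - 1) Γ, ∑ i ∈ Finset.Icc 2 Λ,
                (if 2*j ≤ i then ∑' k' : ℕ, (if i - 2 * j ≤ k' then
                  (2 : ℝ) ^ (-(k' : ℤ) - (j' : ℤ) + (i : ℤ) + 1) * b j' k' else 0) else 0) :=
              Finset.sum_comm
          _ ≤ ∑ j' ∈ Finset.Icc (j - 1) Γ, (2:ℝ)^(2*(j:ℤ) - (j':ℤ) + 2) * S j' := by
              refine Finset.sum_le_sum fun j' _ => ?_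
              have hrw : ∀ i, (if 2*j ≤ i then ∑' k' : ℕ, (if i - 2 * j ≤ k' then
                    (2 : ℝ) ^ (-(k' : ℤ) - (j' : ℤ) + (i : ℤ) + 1) * b j' k' else 0) else 0)
                  = ∑' k' : ℕ, (if 2*j ≤ i ∧ i ≤ k' + 2*j then
                    (2 : ℝ) ^ (-(k' : ℤ) - (j' : ℤ) + (i : ℤ) + 1) * b j' k' else 0) := by
                intro i
                split_ifs with h
                · refine tsum_congr fun k' => ?_
                  congr 1
                  simp only [eq_iff_iff]
                  omega
                · simp only [h, false_and, if_false, tsum_zero]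
              calc ∑ i ∈ Finset.Icc 2 Λ, (if 2*j ≤ i then ∑' k' : ℕ, (if i - 2 * j ≤ k' then
                    (2 : ℝ) ^ (-(k' : ℤ) - (j' : ℤ) + (i : ℤ) + 1) * b j' k' else 0) else 0)
                  = ∑' k' : ℕ, ∑ i ∈ Finset.Icc 2 Λ, (if 2*j ≤ i ∧ i ≤ k' + 2*j then
                    (2 : ℝ) ^ (-(k' : ℤ) - (j' : ℤ) + (i : ℤ) + 1) * b j' k' else 0) := by
                    rw [Finset.sum_congr rfl (fun i _ => hrw i)]
                    exact (Summable.tsum_finsetSum fun i _ =>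
                      summ_aux' (b j') (hb j') (hsum j') j' i j).symm
                _ ≤ ∑' k' : ℕ, (2:ℝ)^(2*(j:ℤ) - (j':ℤ) + 2) * b j' k' := by
                    refine Summable.tsum_le_tsum (fun k' => ?_) ?_ ((hsum j').mul_left _)
                    · calc ∑ i ∈ Finset.Icc 2 Λ, (if 2*j ≤ i ∧ i ≤ k' + 2*j then
                            (2 : ℝ) ^ (-(k' : ℤ) - (j' : ℤ) + (i : ℤ) + 1) * b j' k' else 0)
                          = (∑ i ∈ Finset.Icc 2 Λ, (if 2*j ≤ i ∧ i ≤ k' + 2*j then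
                            (2 : ℝ) ^ (-(k' : ℤ) - (j' : ℤ) + (i : ℤ) + 1) else 0)) * b j' k' := by
                            rw [Finset.sum_mul]
                            refine Finset.sum_congr rfl fun i _ => ?_
                            rw [ite_mul, zero_mul]
                        _ ≤ (2:ℝ)^(2*(j:ℤ) - (j':ℤ) + 2) * b j' k' :=
                            mul_le_mul_of_nonneg_right (lemA Λ j j' k') (hb j' k')
                    · exact summable_sum fun i _ =>
                        summ_aux' (b j') (hb j') (hsum j') j' i j
                _ = (2:ℝ)^(2*(j:ℤ) - (j':ℤ) + 2) * S j' := tsum_mul_left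
    _ = ∑ j ∈ Finset.Icc 1 Γ, ∑ j' ∈ Finset.Icc 0 Γ,
          (if j ≤ j' + 1 then (2:ℝ)^(2*(j:ℤ) - (j':ℤ) + 2) * S j' else 0) := by
        refine Finset.sum_congr rfl fun j _ => ?_
        rw [← Finset.sum_filter]
        refine Finset.sum_congr ?_ (fun _ _ => rfl)
        ext j'
        simp only [Finset.mem_filter, Finset.mem_Icc]
        omega
    _ = ∑ j' ∈ Finset.Icc 0 Γ, ∑ j ∈ Finset.Icc 1 Γ,
          (if j ≤ j' + 1 then (2:ℝ)^(2*(j:ℤ) - (j':ℤ) + 2) * S j' else 0) :=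
        Finset.sum_comm
    _ ≤ ∑ j' ∈ Finset.Icc 0 Γ, (64 / 3) * ((2:ℝ)^(j' : ℕ) * S j') := by
        refine Finset.sum_le_sum fun j' _ => ?_
        calc ∑ j ∈ Finset.Icc 1 Γ,
              (if j ≤ j' + 1 then (2:ℝ)^(2*(j:ℤ) - (j':ℤ) + 2) * S j' else 0)
            = (∑ j ∈ Finset.Icc 1 Γ, (if j ≤ j' + 1 then (4:ℝ)^j else 0)) *
                ((2:ℝ)^(-(j':ℤ) + 2) * S j') := by
              rw [Finset.sum_mul]
              refine Finset.sum_congr rfl fun j _ => ?_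
              rw [ite_mul, zero_mul]
              split_ifs with h
              · rw [← mul_assoc]
                congr 1
                rw [show (4:ℝ) = (2:ℝ)^(2:ℤ) by norm_num, ← zpow_natCast ((2:ℝ)^(2:ℤ)) j,
                  ← zpow_mul, ← zpow_add₀ (two_ne_zero)]
                congr 1; ring
              · rfl
          _ ≤ ((4:ℝ)^(j'+2)/3) * ((2:ℝ)^(-(j':ℤ) + 2) * S j') := by
              apply mul_le_mul_of_nonneg_right _ (mul_nonneg (by positivity) (hS0 j'))
              calc ∑ j ∈ Finset.Icc 1 Γ, (if j ≤ j' + 1 then (4:ℝ)^j else 0)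
                  = ∑ j ∈ (Finset.Icc 1 Γ).filter (fun j => j ≤ j' + 1), (4:ℝ)^j :=
                    (Finset.sum_filter _ _).symm
                _ ≤ ∑ j ∈ Finset.Icc 1 (j'+1), (4:ℝ)^j := by
                    apply Finset.sum_le_sum_of_subset_of_nonneg
                    · intro x hx
                      simp only [Finset.mem_filter, Finset.mem_Icc] at hx
                      simp only [Finset.mem_Icc]; omega
                    · intros; positivity
                _ ≤ (4:ℝ)^(j'+2)/3 := geom4_aux (j'+1)
          _ = (64 / 3) * ((2:ℝ)^(j' : ℕ) * S j') := by
              rw [← mul_assoc, ← mul_assoc]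
              congr 1
              rw [show (4:ℝ) = (2:ℝ)^(2:ℤ) by norm_num, ← zpow_natCast ((2:ℝ)^(2:ℤ)) (j'+2),
                ← zpow_mul, div_mul_eq_mul_div, ← zpow_add₀ (two_ne_zero),
                ← zpow_natCast (2:ℝ) j']
              rw [show (2:ℤ) * (↑(j'+2):ℤ) + (-(j':ℤ) + 2) = (j':ℤ) + 6 by push_cast; ring]
              rw [zpow_add₀ (two_ne_zero)]
              norm_num
              ring
    _ = (64 / 3) * ∑ j' ∈ Finset.Icc 0 Γ, (2 : ℝ) ^ (j' : ℕ) * S j' :=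
        (Finset.mul_sum _ _ _).symm
end
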